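/- Let (X, μ, δ, x_0) be a path-connected H-space with a division map δ (so μ ∘ (pr_1, δ) ≃ pr_2). Then for any two maps f, g : X × X → X, D_m(f, g) ≤ cat_m(X). Consequently, TC^m(X) = cat_m(X), where TC^m(X) := D_m(pr_1, pr_2) is the m-topological complexity. -/

import Mathlib

universe u

namespace RelativeCWComplex

/-- The `n`-dimensional sphere is the set of points in ℝⁿ⁺¹ whose norm equals `1`,
endowed with the subspace topology. -/
noncomputable def sphere (n : ℤ) : TopCat.{u} :=
  TopCat.of <| ULift <| Metric.sphere (0 : EuclideanSpace ℝ <| Fin <| Int.toNat <| n + 1) 1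

/-- The `n`-dimensional closed disk is the set of points in ℝⁿ whose norm is at most `1`,
endowed with the subspace topology. -/
noncomputable def disk (n : ℤ) : TopCat.{u} :=
  TopCat.of <| ULift <| Metric.closedBall (0 : EuclideanSpace ℝ <| Fin <| Int.toNat n) 1

/-- The inclusion map from the `n`-sphere to the `(n + 1)`-disk -/
noncomputable def sphereInclusion (n : ℤ) : sphere.{u} n ⟶ disk.{u} (n + 1) :=
  TopCat.ofHom
    { toFun := fun (p : ULift (Metric.sphere (0 : EuclideanSpace ℝ <| Fin <| Int.toNat <| n + 1) 1)) =>
        (ULift.up ⟨p.down.1, le_of_eq p.down.2⟩ :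
          ULift (Metric.closedBall (0 : EuclideanSpace ℝ <| Fin <| Int.toNat (n + 1)) 1))
      continuous_toFun := by fun_prop }

/-- A type witnessing that `X'` is obtained from `X` by attaching generalized cells `f : S ⟶ D` -/
structure AttachGeneralizedCells {S D : TopCat.{u}} (f : S ⟶ D) (X X' : TopCat.{u}) where
  /-- The index type over the generalized cells -/
  cells : Type u
  /-- An attaching map for each of the generalized cells -/
  attachMaps : cells → (S ⟶ X)
  /-- `X'` is a pushout of `∐ S ⟶ X` and `∐ S ⟶ ∐ D`. -/
  iso_pushout : X' ≅ CategoryTheory.Limits.pushout (CategoryTheory.Limits.Sigma.desc attachMaps)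
    (CategoryTheory.Limits.Sigma.map fun (_ : cells) => f)

/-- A type witnessing that `X'` is obtained from `X` by attaching `(n + 1)`-disks -/
def AttachCells (n : ℤ) := AttachGeneralizedCells (sphereInclusion.{u} n)

end RelativeCWComplex

/-- A relative CW-complex (old Mathlib definition). -/
structure RelativeCWComplex where
  /-- The skeletons. -/
  sk : ℕ → TopCat.{u}
  /-- Each `sk (n + 1)` is obtained from `sk n` by attaching `n`-disks. -/
  attachCells (n : ℕ) : RelativeCWComplex.AttachCells ((n : ℤ) - 1) (sk n) (sk (n + 1))

/-- A CW-complex is a relative CW-complex whose `sk 0` is empty. -/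
structure CWComplex extends RelativeCWComplex.{u} where
  /-- `sk 0` is empty. -/
  isEmpty_sk_zero : IsEmpty (sk 0)

namespace RelativeCWComplex

/-- The inclusion map from `X` to `X'` for an attachment of cells. -/
noncomputable def AttachCells.inclusion {X X' : TopCat.{u}} {n : ℤ} (att : AttachCells n X X') :
    X ⟶ X' :=
  CategoryTheory.CategoryStruct.comp (CategoryTheory.Limits.pushout.inl _ _) att.iso_pushout.inv

/-- The inclusion map from `sk n` to `sk (n + 1)`. -/
noncomputable def skInclusion (X : RelativeCWComplex.{u}) (n : ℕ) : X.sk n ⟶ X.sk (n + 1) :=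
  (X.attachCells n).inclusion

/-- The topology on a relative CW-complex -/
noncomputable def toTopCat (X : RelativeCWComplex.{u}) : TopCat.{u} :=
  CategoryTheory.Limits.colimit (CategoryTheory.Functor.ofSequence X.skInclusion)

end RelativeCWComplex

/-- The underlying topological space of a CW complex. -/
abbrev CWSpace (K : CWComplex.{u}) : Type u := K.toRelativeCWComplex.toTopCat

/-- A CW complex has dimension at most `m` if it has no cells of dimension `> m`. -/
def CWDimLE (K : CWComplex.{u}) (m : ℕ) : Prop :=
  ∀ n : ℕ, m < n →
    IsEmpty (RelativeCWComplex.AttachGeneralizedCells.cells (K.toRelativeCWComplex.attachCells n))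

/-- Hurewicz fibration: the homotopy lifting property with respect to all spaces. -/
def IsFibration {E B : Type u} [TopologicalSpace E] [TopologicalSpace B] (p : C(E, B)) : Prop :=
  ∀ (X : Type u) [TopologicalSpace X] (f : C(X, E)) (H : C(X × unitInterval, B)),
    (∀ x, H (x, 0) = p (f x)) →
    ∃ H' : C(X × unitInterval, E), (∀ z, p (H' z) = H z) ∧ (∀ x, H' (x, 0) = f x)

/-- The inclusion of a subset as a continuous map. -/
def inclMap {X : Type u} [TopologicalSpace X] (U : Set X) : C(U, X) :=
  ⟨Subtype.val, continuous_subtype_val⟩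

/-- Property `A_{m,p}`: every map into `U` from an `m`-dimensional CW complex lifts through `p`. -/
def LiftingProp {E B : Type u} [TopologicalSpace E] [TopologicalSpace B]
    (p : C(E, B)) (m : ℕ) (U : Set B) : Prop :=
  ∀ K : CWComplex.{u}, CWDimLE K m → ∀ φ : C(CWSpace K, U),
    ∃ s : C(CWSpace K, E), ∀ x, p (s x) = (φ x : B)

/-- The `m`-sectional category of `p`, valued in `ℕ∞` (`⊤` if no finite cover exists). -/
noncomputable def secatm {E B : Type u} [TopologicalSpace E] [TopologicalSpace B]
    (p : C(E, B)) (m : ℕ) : ℕ∞ :=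
  sInf ((fun n : ℕ => (n : ℕ∞)) ''
    {k : ℕ | ∃ U : Fin (k + 1) → Set B, (∀ i, IsOpen (U i)) ∧ (⋃ i, U i) = Set.univ ∧
      ∀ i, LiftingProp p m (U i)})

/-- The classical sectional category. -/
noncomputable def secat {E B : Type u} [TopologicalSpace E] [TopologicalSpace B]
    (p : C(E, B)) : ℕ∞ :=
  sInf ((fun n : ℕ => (n : ℕ∞)) ''
    {k : ℕ | ∃ U : Fin (k + 1) → Set B, (∀ i, IsOpen (U i)) ∧ (⋃ i, U i) = Set.univ ∧
      ∀ i, ∃ s : C((U i : Set B), E), ∀ x, p (s x) = (x : B)})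

/-- Property `B_m`. -/
def NullProp {X : Type u} [TopologicalSpace X] (m : ℕ) (U : Set X) : Prop :=
  ∀ K : CWComplex.{u}, CWDimLE K m → ∀ φ : C(CWSpace K, U),
    ((inclMap U).comp φ).Nullhomotopic

/-- The `m`-dimensional Lusternik–Schnirelmann category. -/
noncomputable def catm (X : Type u) [TopologicalSpace X] (m : ℕ) : ℕ∞ :=
  sInf ((fun n : ℕ => (n : ℕ∞)) ''
    {k : ℕ | ∃ U : Fin (k + 1) → Set X, (∀ i, IsOpen (U i)) ∧ (⋃ i, U i) = Set.univ ∧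
      ∀ i, NullProp m (U i)})

/-- Classical (normalized) LS category. -/
noncomputable def catLS (X : Type u) [TopologicalSpace X] : ℕ∞ :=
  sInf ((fun n : ℕ => (n : ℕ∞)) ''
    {k : ℕ | ∃ U : Fin (k + 1) → Set X, (∀ i, IsOpen (U i)) ∧ (⋃ i, U i) = Set.univ ∧
      ∀ i, (inclMap (U i)).Nullhomotopic})

/-- Property `C_{m,f}`. -/
def NullPropMap {X Y : Type u} [TopologicalSpace X] [TopologicalSpace Y]
    (f : C(X, Y)) (m : ℕ) (U : Set X) : Prop :=
  ∀ K : CWComplex.{u}, CWDimLE K m → ∀ φ : C(CWSpace K, U),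
    ((f.comp (inclMap U)).comp φ).Nullhomotopic

/-- The `m`-dimensional LS category of a map. -/
noncomputable def catmMap {X Y : Type u} [TopologicalSpace X] [TopologicalSpace Y]
    (f : C(X, Y)) (m : ℕ) : ℕ∞ :=
  sInf ((fun n : ℕ => (n : ℕ∞)) ''
    {k : ℕ | ∃ U : Fin (k + 1) → Set X, (∀ i, IsOpen (U i)) ∧ (⋃ i, U i) = Set.univ ∧
      ∀ i, NullPropMap f m (U i)})

/-- Property `D_{m,f,g}`. -/
def DistProp {X Y : Type u} [TopologicalSpace X] [TopologicalSpace Y]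
    (f g : C(X, Y)) (m : ℕ) (U : Set X) : Prop :=
  ∀ K : CWComplex.{u}, CWDimLE K m → ∀ φ : C(CWSpace K, U),
    ((f.comp (inclMap U)).comp φ).Homotopic ((g.comp (inclMap U)).comp φ)

/-- The `m`-homotopic distance. -/
noncomputable def homDistm {X Y : Type u} [TopologicalSpace X] [TopologicalSpace Y]
    (f g : C(X, Y)) (m : ℕ) : ℕ∞ :=
  sInf ((fun n : ℕ => (n : ℕ∞)) ''
    {k : ℕ | ∃ U : Fin (k + 1) → Set X, (∀ i, IsOpen (U i)) ∧ (⋃ i, U i) = Set.univ ∧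
      ∀ i, DistProp f g m (U i)})

variable {X : Type u} [TopologicalSpace X] [PathConnectedSpace X]

lemma part1 (μ δ : C(X × X, X)) (x₀ : X)
    (hμ : (μ.comp ((ContinuousMap.id X).prodMk (ContinuousMap.const X x₀))).Homotopic
      (ContinuousMap.id X))
    (hδ : (μ.comp ((ContinuousMap.fst).prodMk δ)).Homotopic ContinuousMap.snd) (m : ℕ)
    (f g : C(X × X, X)) (k : ℕ) (U : Fin (k+1) → Set X) (hUo : ∀ i, IsOpen (U i))
    (hUc : (⋃ i, U i) = Set.univ) (hUn : ∀ i, NullProp m (U i)) :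
    ∃ V : Fin (k + 1) → Set (X × X), (∀ i, IsOpen (V i)) ∧ (⋃ i, V i) = Set.univ ∧
      ∀ i, DistProp f g m (V i) := by
  set d : C(X × X, X) := δ.comp (f.prodMk g) with hd
  refine ⟨fun i => d ⁻¹' (U i), fun i => (hUo i).preimage d.continuous, ?_, ?_⟩
  · rw [← Set.preimage_iUnion, hUc, Set.preimage_univ]
  · intro i K hK φ
    set ψ : C(CWSpace K, X × X) := (inclMap _).comp φ with hψ
    obtain ⟨c, hc0⟩ := hUn i K hK ⟨fun x => ⟨d (ψ x), (φ x).2⟩, by fun_prop⟩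
    have hc : (d.comp ψ).Homotopic (ContinuousMap.const _ c) := by
      have e : (inclMap (U i)).comp (⟨fun x => ⟨d (ψ x), (φ x).2⟩, by fun_prop⟩ :
          C(CWSpace K, U i)) = d.comp ψ := ContinuousMap.ext fun x => rfl
      rwa [e] at hc0
    have h1 : (g.comp ψ).Homotopic (μ.comp ((f.comp ψ).prodMk (d.comp ψ))) := by
      have h := (ContinuousMap.Homotopic.comp hδ (ContinuousMap.Homotopic.refl ((f.prodMk g).comp ψ))).symm
      have e1 : ContinuousMap.snd.comp ((f.prodMk g).comp ψ) = g.comp ψ :=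
        ContinuousMap.ext fun x => rfl
      have e2 : (μ.comp ((ContinuousMap.fst).prodMk δ)).comp ((f.prodMk g).comp ψ)
          = μ.comp ((f.comp ψ).prodMk (d.comp ψ)) := ContinuousMap.ext fun x => rfl
      rwa [e1, e2] at h
    have h2 : (μ.comp ((f.comp ψ).prodMk (d.comp ψ))).Homotopic
        (μ.comp ((f.comp ψ).prodMk (ContinuousMap.const _ c))) :=
      ContinuousMap.Homotopic.comp (ContinuousMap.Homotopic.refl μ)
        ((ContinuousMap.Homotopic.refl (f.comp ψ)).prodMk hc)
    have h3 : (μ.comp ((f.comp ψ).prodMk (ContinuousMap.const _ c))).Homotopic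
        (μ.comp ((f.comp ψ).prodMk (ContinuousMap.const _ x₀))) :=
      ContinuousMap.Homotopic.comp (ContinuousMap.Homotopic.refl μ)
        ((ContinuousMap.Homotopic.refl (f.comp ψ)).prodMk
        ⟨(PathConnectedSpace.somePath c x₀).toHomotopyConst⟩)
    have h4 : (μ.comp ((f.comp ψ).prodMk (ContinuousMap.const _ x₀))).Homotopic (f.comp ψ) := by
      have h := ContinuousMap.Homotopic.comp hμ (ContinuousMap.Homotopic.refl (f.comp ψ))
      have e1 : (μ.comp ((ContinuousMap.id X).prodMk (ContinuousMap.const X x₀))).comp (f.comp ψ)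
          = μ.comp ((f.comp ψ).prodMk (ContinuousMap.const _ x₀)) := ContinuousMap.ext fun x => rfl
      have e2 : (ContinuousMap.id X).comp (f.comp ψ) = f.comp ψ := ContinuousMap.ext fun x => rfl
      rwa [e1, e2] at h
    have e3 : (f.comp (inclMap _)).comp φ = f.comp ψ := rfl
    have e4 : (g.comp (inclMap _)).comp φ = g.comp ψ := rfl
    rw [e3, e4]
    exact ((h1.trans h2).trans (h3.trans h4)).symm

omit [PathConnectedSpace X] in
lemma part2 (x₀ : X) (m : ℕ) (k : ℕ) (W : Fin (k+1) → Set (X × X)) (hWo : ∀ i, IsOpen (W i))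
    (hWc : (⋃ i, W i) = Set.univ)
    (hWd : ∀ i, DistProp (ContinuousMap.fst : C(X × X, X)) ContinuousMap.snd m (W i)) :
    ∃ U : Fin (k + 1) → Set X, (∀ i, IsOpen (U i)) ∧ (⋃ i, U i) = Set.univ ∧
      ∀ i, NullProp m (U i) := by
  set ι : C(X, X × X) := (ContinuousMap.id X).prodMk (ContinuousMap.const X x₀) with hι
  refine ⟨fun i => ι ⁻¹' (W i), fun i => (hWo i).preimage ι.continuous, ?_, ?_⟩
  · rw [← Set.preimage_iUnion, hWc, Set.preimage_univ]
  · intro i K hK φ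
    set ψ : C(CWSpace K, W i) := ⟨fun x => ⟨((φ x : X), x₀), (φ x).2⟩, by fun_prop⟩ with hψ
    have h := hWd i K hK ψ
    have e1 : ((ContinuousMap.fst).comp (inclMap (W i))).comp ψ = (inclMap _).comp φ :=
      ContinuousMap.ext fun x => rfl
    have e2 : ((ContinuousMap.snd : C(X × X, X)).comp (inclMap (W i))).comp ψ
        = ContinuousMap.const _ x₀ := ContinuousMap.ext fun x => rfl
    rw [e1, e2] at h
    exact ⟨x₀, h⟩
/-- For a path-connected `H`-space `X` with division, `D_m(f,g) ≤ cat_m(X)` for all maps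
`f, g : X × X → X`; consequently `TC^m(X) = cat_m(X)`. -/
theorem stmt19 {X : Type u} [TopologicalSpace X] [PathConnectedSpace X]
    (μ δ : C(X × X, X)) (x₀ : X)
    (hμ : (μ.comp ((ContinuousMap.id X).prodMk (ContinuousMap.const X x₀))).Homotopic
      (ContinuousMap.id X))
    (hδ : (μ.comp ((ContinuousMap.fst).prodMk δ)).Homotopic ContinuousMap.snd) (m : ℕ) :
    (∀ f g : C(X × X, X), homDistm f g m ≤ catm X m) ∧
    homDistm (ContinuousMap.fst : C(X × X, X)) ContinuousMap.snd m = catm X m := by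
  have key : ∀ f g : C(X × X, X), homDistm f g m ≤ catm X m := by
    intro f g
    refine sInf_le_sInf (Set.image_mono ?_)
    rintro k ⟨U, hUo, hUc, hUn⟩
    exact part1 μ δ x₀ hμ hδ m f g k U hUo hUc hUn
  refine ⟨key, le_antisymm (key _ _) ?_⟩
  refine sInf_le_sInf (Set.image_mono ?_)
  rintro k ⟨W, hWo, hWc, hWd⟩
  exact part2 x₀ m k W hWo hWc hWd
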